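/- arXiv:2007.00089 — 2 statements merged into one kernel-verified Lean document; each statement's English description precedes it below -/
import Mathlib

section
/- Let J : [0,1] → ℝ satisfy J''(α) + d²·K(α)·J(α) = 0 with J(1) = 0, J'(1) = -d, where |K(α)| ≤ K_M for all α. Then for all α ∈ [0,1], |J(α)| ≤ (1/√K_M)·sinh(d·√K_M·(1-α)). -/
/-!
Taylor's formula with integral remainder at `1` turns the Jacobi equation into
`J α = d (1 - α) - d² ∫_α^1 (s - α) K(s) J(s) ds`, so `|J|` is a subsolution of the Volterra
equation `u α = d (1 - α) + d² K_M ∫_α^1 (s - α) u(s) ds`, of which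
`sinh (d √K_M (1 - α)) / √K_M` is an exact solution. Their difference `h` satisfies
`h α ≤ C ∫_α^1 (s - α) h(s) ds` with `C = d² K_M`; iterating this inequality from a bound
`h ≤ M` gives `h α ≤ M (C (1 - α))ⁿ / n!` for every `n`, hence `h ≤ 0`.
-/

open Set intervalIntegral

theorem taylor_order_one_integral_remainder {f f' f'' : ℝ → ℝ} {a b : ℝ} (hab : a ≤ b)
    (hf : ContinuousOn f (Icc a b)) (hf' : ContinuousOn f' (Icc a b))
    (hff' : ∀ x ∈ Ioo a b, HasDerivAt f (f' x) x)
    (hf'f'' : ∀ x ∈ Ioo a b, HasDerivAt f' (f'' x) x)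
    (hf'' : IntervalIntegrable f'' MeasureTheory.volume a b) :
    f a = f b - (b - a) * f' b + ∫ s in a..b, (s - a) * f'' s := by
  have hF : ∀ x ∈ Ioo a b,
      HasDerivAt (fun s => f s + (a - s) * f' s) ((a - x) * f'' x) x := fun x hx =>
    ((hff' x hx).add (((hasDerivAt_id' x).const_sub a).mul (hf'f'' x hx))).congr_deriv
      (by ring)
  have hcont : ContinuousOn (fun s => f s + (a - s) * f' s) (Icc a b) := by fun_prop
  have hint : IntervalIntegrable (fun s => (a - s) * f'' s) MeasureTheory.volume a b :=
    hf''.continuousOn_mul (by fun_prop)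
  have hftc := integral_eq_sub_of_hasDerivAt_of_le hab hcont hF hint
  have hneg : (∫ s in a..b, (s - a) * f'' s) = -∫ s in a..b, (a - s) * f'' s := by
    simp only [← integral_neg, ← neg_mul, neg_sub]
  rw [hneg, hftc, sub_self, zero_mul, add_zero]
  ring

theorem ContDiffOn.hasDerivAt_derivWithin_Icc {f : ℝ → ℝ} {a b x : ℝ}
    (hf : ContDiffOn ℝ 2 f (Icc a b)) (hx : x ∈ Ioo a b) :
    HasDerivAt (derivWithin f (Icc a b)) (deriv (deriv f) x) x := by
  have hf' : ContDiffOn ℝ 1 (deriv f) (Ioo a b) :=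
    (hf.mono Ioo_subset_Icc_self).deriv_of_isOpen isOpen_Ioo (by norm_num)
  refine (((hf'.differentiableOn one_ne_zero x hx).differentiableAt
    (isOpen_Ioo.mem_nhds hx)).hasDerivAt).congr_of_eventuallyEq ?_
  filter_upwards [isOpen_Ioo.mem_nhds hx] with y hy
  exact derivWithin_of_mem_nhds (Icc_mem_nhds hy.1 hy.2)

theorem integral_upper_sub_pow (b a : ℝ) (n : ℕ) :
    ∫ s in a..b, (b - s) ^ n = (b - a) ^ (n + 1) / (n + 1) := by
  simp [integral_comp_sub_left (fun x => x ^ n) b]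

theorem le_pow_div_factorial_of_le_volterra {h : ℝ → ℝ} {a b C M : ℝ} (hC : 0 ≤ C)
    (hh : ContinuousOn h (Icc a b)) (hM : ∀ x ∈ Icc a b, h x ≤ M) (hM0 : 0 ≤ M)
    (hV : ∀ x ∈ Icc a b, h x ≤ C * ∫ s in x..b, (s - x) * h s) (n : ℕ) :
    ∀ x ∈ Icc a b, h x ≤ M * (C * (b - a)) ^ n / n.factorial * (b - x) ^ n := by
  induction n with
  | zero => simpa using hM
  | succ n ih =>
    intro x hx
    set K := M * (C * (b - a)) ^ n / n.factorial
    have hK : 0 ≤ K := by have := hx.1.trans hx.2; positivity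
    have hsub : uIcc x b ⊆ Icc a b := by
      rw [uIcc_of_le hx.2]; exact Icc_subset_Icc_left hx.1
    have hmono : (∫ s in x..b, (s - x) * h s) ≤ ∫ s in x..b, (b - a) * K * (b - s) ^ n := by
      refine integral_mono_on hx.2 ((hh.mono hsub).intervalIntegrable.continuousOn_mul
        (by fun_prop)) (by apply Continuous.intervalIntegrable; fun_prop) fun s hs => ?_
      have hs' : s ∈ Icc a b := hsub (Icc_subset_uIcc hs)
      have hbound := ih s hs'
      have hbound_nonneg : 0 ≤ K * (b - s) ^ n :=
        mul_nonneg hK (pow_nonneg (by linarith [hs.2]) _)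
      have hkernel : s - x ≤ b - a := by linarith [hs.2, hx.1]
      nlinarith [hs.1]
    calc h x ≤ C * ∫ s in x..b, (s - x) * h s := hV x hx
      _ ≤ C * ∫ s in x..b, (b - a) * K * (b - s) ^ n := mul_le_mul_of_nonneg_left hmono hC
      _ = _ := by
        rw [integral_const_mul, integral_upper_sub_pow, Nat.factorial_succ]
        simp only [K]
        push_cast
        field_simp
        ring

theorem nonpos_of_le_volterra {h : ℝ → ℝ} {a b C : ℝ} (hC : 0 ≤ C)
    (hh : ContinuousOn h (Icc a b))
    (hV : ∀ x ∈ Icc a b, h x ≤ C * ∫ s in x..b, (s - x) * h s) :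
    ∀ x ∈ Icc a b, h x ≤ 0 := by
  intro x hx
  obtain ⟨M, hM⟩ := isCompact_Icc.exists_bound_of_continuousOn hh
  have hbound := fun n => le_pow_div_factorial_of_le_volterra hC hh
    (fun y hy => (le_abs_self _).trans (hM y hy)) ((norm_nonneg _).trans (hM x hx)) hV n x hx
  have hlim : Filter.Tendsto (fun n : ℕ => M * (C * (b - a)) ^ n / n.factorial * (b - x) ^ n)
      Filter.atTop (nhds 0) := by
    simpa [mul_pow, mul_div_assoc, div_mul_eq_mul_div, mul_assoc] using
      (FloorSemiring.tendsto_pow_div_factorial_atTop (C * (b - a) * (b - x))).const_mul M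
  exact ge_of_tendsto' hlim hbound

theorem sinh_comparison_eq {KM d a b : ℝ} (hKM : 0 < KM) (hab : a ≤ b) :
    1 / √KM * Real.sinh (d * √KM * (b - a)) =
      d * (b - a) +
        d ^ 2 * KM * ∫ s in a..b, (s - a) * (1 / √KM * Real.sinh (d * √KM * (b - s))) := by
  have hsqrt : √KM ≠ 0 := (Real.sqrt_pos.2 hKM).ne'
  have hinner (x : ℝ) : HasDerivAt (fun s => d * √KM * (b - s)) (-(d * √KM)) x := by
    simpa using ((hasDerivAt_id' x).const_sub b).const_mul (d * √KM)
  have := taylor_order_one_integral_remainder hab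
    (f := fun s => 1 / √KM * Real.sinh (d * √KM * (b - s)))
    (f' := fun s => -d * Real.cosh (d * √KM * (b - s)))
    (f'' := fun s => d ^ 2 * KM * (1 / √KM * Real.sinh (d * √KM * (b - s))))
    (by fun_prop) (by fun_prop)
    (fun x _ => (((Real.hasDerivAt_sinh _).comp x (hinner x)).const_mul _).congr_deriv
      (by field_simp))
    (fun x _ => (((Real.hasDerivAt_cosh _).comp x (hinner x)).const_mul _).congr_deriv
      (by field_simp; rw [Real.sq_sqrt hKM.le]; ring))
    (by apply Continuous.intervalIntegrable; fun_prop)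
  rw [this, ← integral_const_mul]
  simp only [sub_self, mul_zero, Real.sinh_zero, Real.cosh_zero, mul_left_comm (d ^ 2 * KM)]
  ring

theorem abs_le_volterra_of_jacobi {J K : ℝ → ℝ} {d KM a b : ℝ} (hab : a < b) (hd : 0 ≤ d)
    (hK : ContinuousOn K (Icc a b)) (hKb : ∀ x ∈ Icc a b, |K x| ≤ KM)
    (hJ : ContDiffOn ℝ 2 J (Icc a b))
    (hODE : ∀ x ∈ Ioo a b, deriv (deriv J) x + d ^ 2 * K x * J x = 0)
    (hJb : J b = 0) (hJ'b : derivWithin J (Icc a b) b = -d) :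
    ∀ x ∈ Icc a b, |J x| ≤ d * (b - x) + d ^ 2 * KM * ∫ s in x..b, (s - x) * |J s| := by
  intro x hx
  have hsub : uIcc x b ⊆ Icc a b := by rw [uIcc_of_le hx.2]; exact Icc_subset_Icc_left hx.1
  have hIoo : Ioo x b ⊆ Ioo a b := Ioo_subset_Ioo_left hx.1
  have hJc : ContinuousOn J (Icc a b) := hJ.continuousOn
  have hJ'' : ContinuousOn (fun s => -(d ^ 2 * K s * J s)) (Icc a b) := by fun_prop
  have htaylor : J x = d * (b - x) + ∫ s in x..b, (s - x) * -(d ^ 2 * K s * J s) := by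
    have := taylor_order_one_integral_remainder hx.2 (hJc.mono (Icc_subset_Icc_left hx.1))
      ((hJ.continuousOn_derivWithin (uniqueDiffOn_Icc hab) (by norm_num)).mono
        (Icc_subset_Icc_left hx.1))
      (fun y hy => (hJ.differentiableOn (by norm_num) y (Ioo_subset_Icc_self (hIoo hy)))
        |>.hasDerivWithinAt.hasDerivAt (Icc_mem_nhds (hIoo hy).1 (hIoo hy).2))
      (fun y hy => (hJ.hasDerivAt_derivWithin_Icc (hIoo hy)).congr_deriv
        (by linarith [hODE y (hIoo hy)]))
      (hJ''.mono hsub).intervalIntegrable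
    rw [this, hJb, hJ'b]
    ring
  calc |J x| ≤ |d * (b - x)| + |∫ s in x..b, (s - x) * -(d ^ 2 * K s * J s)| := by
        rw [htaylor]; exact abs_add_le _ _
    _ ≤ d * (b - x) + ∫ s in x..b, |(s - x) * -(d ^ 2 * K s * J s)| := by
        rw [abs_of_nonneg (mul_nonneg hd (sub_nonneg.2 hx.2))]
        gcongr
        exact abs_integral_le_integral_abs hx.2
    _ ≤ d * (b - x) + ∫ s in x..b, d ^ 2 * KM * ((s - x) * |J s|) := by
        gcongr
        refine integral_mono_on hx.2 ?_ ?_ fun s hs => ?_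
        · exact ((hJ''.mono hsub).intervalIntegrable.continuousOn_mul (by fun_prop)).abs
        · exact ((hJc.mono hsub).abs.intervalIntegrable.continuousOn_mul (by fun_prop)).const_mul _
        · have hs' : s - x ≥ 0 := sub_nonneg.2 hs.1
          rw [abs_mul, abs_neg, abs_mul, abs_mul, abs_of_nonneg hs', abs_of_nonneg (sq_nonneg d)]
          nlinarith [hKb s (hsub (Icc_subset_uIcc hs)),
            mul_nonneg (mul_nonneg hs' (sq_nonneg d)) (abs_nonneg (J s))]
    _ = d * (b - x) + d ^ 2 * KM * ∫ s in x..b, (s - x) * |J s| := by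
        rw [integral_const_mul]

/-- Rauch-type comparison bound for a Jacobi field `J` along a geodesic of
length `d` on a surface with Gaussian curvature bounded by `K_M`. -/
theorem jacobi_sinh_bound (J K : ℝ → ℝ) (d KM : ℝ) (hd : 0 < d) (hKM : 0 < KM)
    (hK : ContinuousOn K (Set.Icc 0 1))
    (hKb : ∀ α ∈ Set.Icc (0:ℝ) 1, |K α| ≤ KM)
    (hJ : ContDiffOn ℝ 2 J (Set.Icc 0 1))
    (hODE : ∀ α ∈ Set.Icc (0:ℝ) 1, deriv (deriv J) α + d^2 * K α * J α = 0)
    (hJ1 : J 1 = 0) (hJ'1 : deriv J 1 = -d) :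
    ∀ α ∈ Set.Icc (0:ℝ) 1,
      |J α| ≤ (1 / Real.sqrt KM) * Real.sinh (d * Real.sqrt KM * (1 - α)) := by
  have hJ'1within : derivWithin J (Icc 0 1) 1 = -d := by
    -- `deriv J 1 ≠ 0` is not the junk value, so `J` is differentiable at `1`.
    rw [(differentiableAt_of_deriv_ne_zero (by linarith : deriv J 1 ≠ 0)).derivWithin
      (uniqueDiffOn_Icc one_pos 1 (right_mem_Icc.2 zero_le_one)), hJ'1]
  have hJbound := abs_le_volterra_of_jacobi one_pos hd.le hK hKb hJ
    (fun x hx => hODE x (Ioo_subset_Icc_self hx)) hJ1 hJ'1within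
  set g : ℝ → ℝ := fun s => 1 / √KM * Real.sinh (d * √KM * (1 - s))
  have hV : ∀ x ∈ Icc (0:ℝ) 1,
      |J x| - g x ≤ d ^ 2 * KM * ∫ s in x..1, (s - x) * (|J s| - g s) := by
    intro x hx
    have hsub : uIcc x 1 ⊆ Icc 0 1 := by rw [uIcc_of_le hx.2]; exact Icc_subset_Icc_left hx.1
    simp only [mul_sub]
    rw [integral_sub ((hJ.continuousOn.mono hsub).abs.intervalIntegrable.continuousOn_mul
      (by fun_prop)) (by apply Continuous.intervalIntegrable; fun_prop)]
    linarith [hJbound x hx, sinh_comparison_eq (d := d) hKM hx.2]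
  intro α hα
  exact sub_nonpos.1 <| nonpos_of_le_volterra (h := fun s => |J s| - g s) (by positivity)
    (hJ.continuousOn.abs.sub (by fun_prop)) hV α hα
end

section
/- With ρ(r) = ∫_0^r s^β·e^{h(s)} ds, β ∈ (−1,0), h continuous with h(0) = h₀, and φ(ρ(r)) = r^β·e^{h(r)}·ψ(r) where ψ is C¹ with ψ(0) = 0 and ψ'(0) = 1, one has lim_{ρ→0⁺} φ(ρ)/ρ = 1 + β, provided additionally that r·h'(r) → 0 as r → 0 (weighted regularity of h). -/
open Set Filter MeasureTheory Topology

/-!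
Write `ρ(r) = ∫₀^r s^β g(s) ds` with `g = exp ∘ h`. Since `β > -1`, L'Hôpital's rule against
`r^(1+β)` gives `ρ(r) ~ g(0) r^(1+β) / (1+β)`, while `ψ(r) ~ r` gives
`φ(ρ(r)) = r^β g(r) ψ(r) ~ g(0) r^(1+β)`; so `φ(ρ(r)) / ρ(r) → 1 + β` as `r → 0⁺`. Finally `ρ` is
continuous, vanishes at `0` and is positive to its right, so by the intermediate value theorem it
maps right neighbourhoods of `0` onto right neighbourhoods of `0`, and the limit in `r` is the
limit in `ρ`.
-/

theorem nhdsGT_le_map_nhdsGT {P : ℝ → ℝ} {a b : ℝ} (hab : a < b) (hP : ContinuousOn P (Icc a b))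
    (hpos : ∀ x ∈ Ioc a b, P a < P x) : 𝓝[>] (P a) ≤ map P (𝓝[>] a) := by
  refine le_map fun s hs => ?_
  obtain ⟨δ, hδ, hδs⟩ := mem_nhdsGT_iff_exists_Ioo_subset.mp hs
  obtain ⟨c, hac, hc⟩ := exists_between (lt_min hδ hab)
  have hcb : c ≤ b := (hc.trans_le (min_le_right _ _)).le
  have hIVT : Ioc (P a) (P c) ⊆ P '' Ioc a c :=
    intermediate_value_Ioc hac.le (hP.mono (Icc_subset_Icc_right hcb))
  refine mem_of_superset (Ioc_mem_nhdsGT (hpos c ⟨hac, hcb⟩)) (hIVT.trans (image_mono ?_))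
  exact fun x hx => hδs ⟨hx.1, hx.2.trans_lt (hc.trans_le (min_le_left _ _))⟩

theorem ContinuousOn.tendsto_nhdsGT_left {X : Type*} [TopologicalSpace X] {f : ℝ → X} {a b : ℝ}
    (hab : a < b) (hf : ContinuousOn f (Icc a b)) : Tendsto f (𝓝[>] a) (𝓝 (f a)) :=
  ((hf a (left_mem_Icc.2 hab.le)).mono_of_mem_nhdsWithin (Icc_mem_nhdsGT hab)).tendsto

theorem tendsto_div_nhdsGT_of_hasDerivAt {ψ : ℝ → ℝ} {d : ℝ} (hψ0 : ψ 0 = 0)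
    (hd : HasDerivAt ψ d 0) : Tendsto (fun x => ψ x / x) (𝓝[>] 0) (𝓝 d) := by
  simpa [hψ0, div_eq_inv_mul] using hd.tendsto_slope_zero_right

section WeightedPrimitive

variable {β r₀ : ℝ} {g : ℝ → ℝ}

theorem intervalIntegrable_rpow_mul (hβ : -1 < β) (hr₀ : 0 ≤ r₀) (hg : ContinuousOn g (Icc 0 r₀)) :
    IntervalIntegrable (fun s => s ^ β * g s) volume 0 r₀ :=
  (intervalIntegral.intervalIntegrable_rpow' hβ).mul_continuousOn (by rwa [uIcc_of_le hr₀])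

theorem continuousOn_integral_rpow_mul (hβ : -1 < β) (hr₀ : 0 ≤ r₀)
    (hg : ContinuousOn g (Icc 0 r₀)) :
    ContinuousOn (fun r => ∫ s in (0:ℝ)..r, s ^ β * g s) (Icc 0 r₀) := by
  simpa only [uIcc_of_le hr₀] using intervalIntegral.continuousOn_primitive_interval'
    (intervalIntegrable_rpow_mul hβ hr₀ hg) left_mem_uIcc

theorem hasDerivAt_integral_rpow_mul (hβ : -1 < β) (hg : ContinuousOn g (Icc 0 r₀)) {x : ℝ}
    (hx : x ∈ Ioo 0 r₀) :
    HasDerivAt (fun r => ∫ s in (0:ℝ)..r, s ^ β * g s) (x ^ β * g x) x := by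
  have hcont : ContinuousOn (fun s => s ^ β * g s) (Ioo 0 r₀) := fun y hy =>
    ((Real.continuousAt_rpow_const y β (Or.inl hy.1.ne')).continuousWithinAt).mul
      (hg.mono Ioo_subset_Icc_self y hy)
  refine intervalIntegral.integral_hasDerivAt_right
    (intervalIntegrable_rpow_mul hβ hx.1.le (hg.mono (Icc_subset_Icc_right hx.2.le)))
    (hcont.stronglyMeasurableAtFilter isOpen_Ioo x hx) ?_
  exact hcont.continuousAt (isOpen_Ioo.mem_nhds hx)

theorem integral_rpow_mul_pos (hβ : -1 < β) (hg : ContinuousOn g (Icc 0 r₀))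
    (hgpos : ∀ s ∈ Ioo 0 r₀, 0 < g s) {x : ℝ} (hx : x ∈ Ioc 0 r₀) :
    0 < ∫ s in (0:ℝ)..x, s ^ β * g s :=
  intervalIntegral.intervalIntegral_pos_of_pos_on
    (intervalIntegrable_rpow_mul hβ hx.1.le (hg.mono (Icc_subset_Icc_right hx.2)))
    (fun s hs => mul_pos (Real.rpow_pos_of_pos hs.1 β) (hgpos s ⟨hs.1, hs.2.trans_le hx.2⟩)) hx.1

theorem tendsto_integral_rpow_mul_div_rpow (hβ : -1 < β) (hr₀ : 0 < r₀)
    (hg : ContinuousOn g (Icc 0 r₀)) :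
    Tendsto (fun r => (∫ s in (0:ℝ)..r, s ^ β * g s) / r ^ (1 + β)) (𝓝[>] 0)
      (𝓝 (g 0 / (1 + β))) := by
  have hβ' : 0 < 1 + β := by linarith
  have hnum : Tendsto (fun r => ∫ s in (0:ℝ)..r, s ^ β * g s) (𝓝[>] 0) (𝓝 0) := by
    simpa using (continuousOn_integral_rpow_mul hβ hr₀.le hg).tendsto_nhdsGT_left hr₀
  have hden : Tendsto (fun r : ℝ => r ^ (1 + β)) (𝓝[>] 0) (𝓝 0) := by
    simpa [Real.zero_rpow hβ'.ne'] using
      (Real.continuousAt_rpow_const 0 (1 + β) (Or.inr hβ'.le)).tendsto.mono_left nhdsWithin_le_nhds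
  refine HasDerivAt.lhopital_zero_right_on_Ioo hr₀
    (fun x hx => hasDerivAt_integral_rpow_mul hβ hg hx)
    (fun x hx => by simpa using Real.hasDerivAt_rpow_const (p := 1 + β) (Or.inl hx.1.ne'))
    (fun x hx => (mul_pos hβ' (Real.rpow_pos_of_pos hx.1 β)).ne') hnum hden ?_
  refine ((hg.tendsto_nhdsGT_left hr₀).div_const (1 + β)).congr' ?_
  filter_upwards [self_mem_nhdsWithin] with x (hx : 0 < x)
  rw [mul_comm (1 + β), mul_div_mul_left _ _ (Real.rpow_pos_of_pos hx β).ne']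

end WeightedPrimitive

theorem cone_angle_limit_general (β r₀ : ℝ) (h ψ φ : ℝ → ℝ)
    (hβ₁ : -1 < β) (hr₀ : 0 < r₀)
    (hh : ContinuousOn h (Icc 0 r₀))
    (hψ0 : ψ 0 = 0) (hψ'0 : deriv ψ 0 = 1)
    (hφ : ∀ r ∈ Ioc (0:ℝ) r₀,
      φ (∫ s in (0:ℝ)..r, s ^ β * Real.exp (h s)) = r ^ β * Real.exp (h r) * ψ r) :
    Tendsto (fun ρ => φ ρ / ρ) (nhdsWithin 0 (Ioi 0)) (nhds (1 + β)) := by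
  set ρ := fun r => ∫ s in (0:ℝ)..r, s ^ β * Real.exp (h s)
  have hexp : ContinuousOn (fun s => Real.exp (h s)) (Icc 0 r₀) :=
    Real.continuous_exp.comp_continuousOn hh
  have hρ := tendsto_integral_rpow_mul_div_rpow hβ₁ hr₀ hexp
  -- `deriv` is `0` where the function is not differentiable, so `deriv ψ 0 = 1` forces it to be.
  have hψ' : HasDerivAt ψ 1 0 :=
    hψ'0 ▸ (differentiableAt_of_deriv_ne_zero (by simp [hψ'0])).hasDerivAt
  have hψ := tendsto_div_nhdsGT_of_hasDerivAt hψ0 hψ'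
  have hφρ : Tendsto (fun r => φ (ρ r) / r ^ (1 + β)) (𝓝[>] 0) (𝓝 (Real.exp (h 0))) := by
    have := (hexp.tendsto_nhdsGT_left hr₀).mul hψ
    rw [mul_one] at this
    refine this.congr' ?_
    filter_upwards [Ioo_mem_nhdsGT hr₀] with x hx
    rw [hφ x (Ioo_subset_Ioc_self hx), Real.rpow_add hx.1, Real.rpow_one]
    field_simp [(Real.rpow_pos_of_pos hx.1 β).ne']
  have hratio : Tendsto (fun r => φ (ρ r) / ρ r) (𝓝[>] 0) (𝓝 (1 + β)) := by
    have hβ' : 0 < 1 + β := by linarith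
    have := hφρ.div hρ (by positivity)
    rw [div_div_cancel₀ (Real.exp_pos _).ne'] at this
    refine this.congr' ?_
    filter_upwards [self_mem_nhdsWithin] with x (hx : 0 < x)
    exact div_div_div_cancel_right₀ (Real.rpow_pos_of_pos hx _).ne' _ _
  have hmap : 𝓝[>] 0 ≤ map ρ (𝓝[>] 0) := by
    simpa [ρ] using nhdsGT_le_map_nhdsGT hr₀ (continuousOn_integral_rpow_mul hβ₁ hr₀.le hexp)
      (fun x hx => by simpa [ρ] using integral_rpow_mul_pos hβ₁ hexp (fun s _ => Real.exp_pos _) hx)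
  exact (tendsto_map'_iff.2 hratio).mono_left hmap

/-- The cone-angle computation of Lemma A.1(2): with
`ρ(r) = ∫₀^r s^β e^{h(s)} ds` and `φ(ρ(r)) = r^β e^{h(r)} ψ(r)`, where
`ψ(0) = 0`, `ψ'(0) = 1` and `r·h'(r) → 0`, one has `φ(ρ)/ρ → 1 + β` as
`ρ → 0⁺`. -/
theorem cone_angle_limit (β r₀ h₀ : ℝ) (h h' ψ φ : ℝ → ℝ)
    (hβ₁ : -1 < β) (hβ₂ : β < 0) (hr₀ : 0 < r₀)
    (hh : ContinuousOn h (Icc 0 r₀)) (hh0 : h 0 = h₀)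
    (hh' : ∀ r ∈ Ioo (0:ℝ) r₀, HasDerivAt h (h' r) r)
    (hrh' : Tendsto (fun r => r * h' r) (nhdsWithin 0 (Ioi 0)) (nhds 0))
    (hψ : ContDiff ℝ 1 ψ) (hψ0 : ψ 0 = 0) (hψ'0 : deriv ψ 0 = 1)
    (hφ : ∀ r ∈ Ioc (0:ℝ) r₀,
      φ (∫ s in (0:ℝ)..r, s ^ β * Real.exp (h s)) = r ^ β * Real.exp (h r) * ψ r) :
    Tendsto (fun ρ => φ ρ / ρ) (nhdsWithin 0 (Ioi 0)) (nhds (1 + β)) :=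
  cone_angle_limit_general β r₀ h ψ φ hβ₁ hr₀ hh hψ0 hψ'0 hφ
end
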